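/- With the notation above (each φ_i invertible), one also has the decomposition 1 + yx = v₋ h v₊⁻¹, where v₋ h = 1 + [yⁱ x̂_j]_{i≥j} and v₊ = 1 − [yⁱ x̂_j]_{i<j}; equivalently v₋ h − v₊ = [yⁱ x̂_j]. -/
import Mathlib


open LinearMap in
/-- The block matrix endomorphism of `⊕ W_i` with `(i,j)` block `a i j : W j → W i`. -/
noncomputable def blockMat6 {s : ℕ} (W : Fin s → Type)
    [∀ i, AddCommGroup (W i)] [∀ i, Module ℂ (W i)]
    (a : ∀ i j : Fin s, W j →ₗ[ℂ] W i) : Module.End ℂ (∀ i, W i) :=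
  ∑ i, ∑ j, (LinearMap.single ℂ W i) ∘ₗ (a i j) ∘ₗ (LinearMap.proj j)


namespace BM6
open LinearMap

variable {s : ℕ} {W : Fin s → Type} [∀ i, AddCommGroup (W i)] [∀ i, Module ℂ (W i)]

lemma sumSingleProj : (∑ i, (single ℂ W i) ∘ₗ (proj i)) = (1 : Module.End ℂ (∀ i, W i)) := by
  ext w j
  simp [Pi.single_apply, Finset.sum_apply]

/-- the (i,j) entry of a block endomorphism -/
noncomputable def ent (M : Module.End ℂ (∀ i, W i)) (i j : Fin s) : W j →ₗ[ℂ] W i :=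
  (proj i) ∘ₗ (M : (∀ i, W i) →ₗ[ℂ] (∀ i, W i)) ∘ₗ (single ℂ W j)

lemma ent_blockMat6 (a : ∀ i j : Fin s, W j →ₗ[ℂ] W i) (i j : Fin s) :
    ent (blockMat6 W a) i j = a i j := by
  ext w
  simp only [ent, blockMat6, LinearMap.sum_apply, Finset.sum_apply, LinearMap.comp_apply,
    proj_apply, single_apply]
  rw [Finset.sum_eq_single i]
  · rw [Finset.sum_eq_single j]
    · simp
    · intro c _ hc
      rw [Pi.single_eq_of_ne hc, map_zero, Pi.single_eq_same]
    · simp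
  · intro b _ hb
    rw [Finset.sum_eq_single j]
    · rw [Pi.single_eq_of_ne (Ne.symm hb)]
    · intro c _ hc
      rw [Pi.single_eq_of_ne hc, map_zero, Pi.single_zero]; rfl
    · simp
  · simp

lemma ent_sum {ι : Type} (t : Finset ι) (f : ι → Module.End ℂ (∀ i, W i)) (i j : Fin s) :
    ent (∑ k ∈ t, f k) i j = ∑ k ∈ t, ent (f k) i j := by
  ext w; simp [ent, Finset.sum_apply]

lemma blockMat6_eta (M : Module.End ℂ (∀ i, W i)) :
    blockMat6 W (fun i j => ent M i j) = M := by
  have e : ∀ i j : Fin s, (single ℂ W i) ∘ₗ (ent M i j) ∘ₗ (proj j)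
      = ((single ℂ W i) ∘ₗ (proj i)) * M * ((single ℂ W j) ∘ₗ (proj j)) := by
    intro i j; rfl
  have key : (∑ i, (single ℂ W i) ∘ₗ (proj i) : Module.End ℂ (∀ i, W i)) * M *
      (∑ j, (single ℂ W j) ∘ₗ (proj j) : Module.End ℂ (∀ i, W i))
      = blockMat6 W (fun i j => ent M i j) := by
    rw [Finset.sum_mul, Finset.sum_mul]
    unfold blockMat6
    refine Finset.sum_congr rfl fun i _ => ?_
    rw [Finset.mul_sum]
    exact Finset.sum_congr rfl fun j _ => (e i j).symm
  rw [← key, sumSingleProj, one_mul, mul_one]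

lemma ent_ext {M N : Module.End ℂ (∀ i, W i)} (h : ∀ i j, ent M i j = ent N i j) : M = N := by
  rw [← blockMat6_eta M, ← blockMat6_eta N]
  exact congrArg _ (funext fun i => funext fun j => h i j)

lemma ent_mul (M N : Module.End ℂ (∀ i, W i)) (i j : Fin s) :
    ent (M * N) i j = ∑ k, (ent M i k) ∘ₗ (ent N k j) := by
  have : M * N = ∑ k, M * ((single ℂ W k) ∘ₗ (proj k)) * N := by
    rw [← Finset.sum_mul, ← Finset.mul_sum, sumSingleProj, mul_one]
  rw [this, ent_sum]
  refine Finset.sum_congr rfl fun k _ => ?_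
  rfl

lemma ent_add (M N : Module.End ℂ (∀ i, W i)) (i j : Fin s) :
    ent (M + N) i j = ent M i j + ent N i j := by
  ext w; simp [ent]

lemma ent_sub (M N : Module.End ℂ (∀ i, W i)) (i j : Fin s) :
    ent (M - N) i j = ent M i j - ent N i j := by
  ext w; simp [ent]

lemma blockMat6_mul (a b : ∀ i j : Fin s, W j →ₗ[ℂ] W i) :
    blockMat6 W a * blockMat6 W b = blockMat6 W (fun i j => ∑ k, (a i k) ∘ₗ (b k j)) := by
  apply ent_ext
  intro i j
  simp [ent_mul, ent_blockMat6]

lemma blockMat6_add (a b : ∀ i j : Fin s, W j →ₗ[ℂ] W i) :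
    blockMat6 W a + blockMat6 W b = blockMat6 W (fun i j => a i j + b i j) := by
  apply ent_ext
  intro i j
  simp [ent_add, ent_blockMat6]

end BM6

namespace BM6
open LinearMap
variable {s : ℕ} {W : Fin s → Type} [∀ i, AddCommGroup (W i)] [∀ i, Module ℂ (W i)]

lemma ent_one_ne {i j : Fin s} (hij : i ≠ j) :
    ent (1 : Module.End ℂ (∀ i, W i)) i j = 0 := by
  ext w
  simp [ent, Pi.single_eq_of_ne hij]

lemma ent_zero (i j : Fin s) : ent (0 : Module.End ℂ (∀ i, W i)) i j = 0 := by
  ext w; simp [ent]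

lemma nilp_lower (c : ∀ i j : Fin s, W j →ₗ[ℂ] W i) (hc : ∀ i j, ¬ j < i → c i j = 0) :
    IsNilpotent (blockMat6 W c) := by
  refine ⟨s, ?_⟩
  have key : ∀ m : ℕ, ∀ i j : Fin s, (i : ℕ) < m + (j : ℕ) →
      ent ((blockMat6 W c) ^ m) i j = 0 := by
    intro m
    induction m with
    | zero =>
      intro i j hij
      rw [pow_zero]
      exact ent_one_ne (by rintro rfl; omega)
    | succ m IH =>
      intro i j hij
      rw [pow_succ, ent_mul]
      apply Finset.sum_eq_zero
      intro k _
      by_cases hk : j < k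
      · rw [IH i k (by rw [Fin.lt_def] at hk; omega), zero_comp]
      · rw [ent_blockMat6, hc k j hk, comp_zero]
  exact ent_ext fun i j =>
    (key s i j (lt_of_lt_of_le i.isLt (Nat.le_add_right s j))).trans (ent_zero i j).symm

lemma nilp_upper (c : ∀ i j : Fin s, W j →ₗ[ℂ] W i) (hc : ∀ i j, ¬ i < j → c i j = 0) :
    IsNilpotent (blockMat6 W c) := by
  refine ⟨s, ?_⟩
  have key : ∀ m : ℕ, ∀ i j : Fin s, (j : ℕ) < m + (i : ℕ) →
      ent ((blockMat6 W c) ^ m) i j = 0 := by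
    intro m
    induction m with
    | zero =>
      intro i j hij
      rw [pow_zero]
      exact ent_one_ne (by rintro rfl; omega)
    | succ m IH =>
      intro i j hij
      rw [pow_succ, ent_mul]
      apply Finset.sum_eq_zero
      intro k _
      by_cases hk : k < j
      · rw [IH i k (by rw [Fin.lt_def] at hk; omega), zero_comp]
      · rw [ent_blockMat6, hc k j hk, comp_zero]
  exact ent_ext fun i j =>
    (key s i j (lt_of_lt_of_le j.isLt (Nat.le_add_right s i))).trans (ent_zero i j).symm

lemma blockMat6_zero : blockMat6 W (fun _ _ => (0 : _ →ₗ[ℂ] _)) = 0 := by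
  apply ent_ext
  intro i j
  rw [ent_blockMat6, ent_zero]


lemma blockMat6_sub (a b : ∀ i j : Fin s, W j →ₗ[ℂ] W i) :
    blockMat6 W a - blockMat6 W b = blockMat6 W (fun i j => a i j - b i j) := by
  apply ent_ext
  intro i j
  simp [ent_sub, ent_blockMat6]

end BM6


set_option maxHeartbeats 2000000 in
open LinearMap BM6 in
/-- The other block Gauss decomposition `1 + yx = v₋ h v₊⁻¹`, with
`v₋ h = 1 + [yⁱ x̂_j]_{i≥j}`, `v₊ = 1 − [yⁱ x̂_j]_{i<j}`; equivalently
`v₋ h − v₊ = [yⁱ x̂_j]`. -/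
theorem stmt_6 (V : Type) [AddCommGroup V] [Module ℂ V] [FiniteDimensional ℂ V]
    (s : ℕ) (W : Fin s → Type) [∀ i, AddCommGroup (W i)] [∀ i, Module ℂ (W i)]
    [∀ i, FiniteDimensional ℂ (W i)]
    (x : (∀ i, W i) →ₗ[ℂ] V) (y : V →ₗ[ℂ] ∀ i, W i)
    (xc : ∀ i : Fin s, W i →ₗ[ℂ] V) (yc : ∀ i : Fin s, V →ₗ[ℂ] W i)
    (hxc : ∀ i, xc i = x ∘ₗ LinearMap.single ℂ W i)
    (hyc : ∀ i, yc i = LinearMap.proj i ∘ₗ y)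
    (φ : ℕ → Module.End ℂ V)
    (hφdef : ∀ n, φ n = 1 + ∑ i : Fin s, if (i : ℕ) < n then (xc i) ∘ₗ (yc i) else 0)
    (hφ : ∀ n, IsUnit (φ n))
    (xhat : ∀ i : Fin s, W i →ₗ[ℂ] V)
    (hxhat : ∀ i, xhat i = (Ring.inverse (φ i)) ∘ₗ (xc i))
    (vp : Module.End ℂ (∀ i, W i))
    (hvp : vp = 1 - blockMat6 W (fun i j => if i < j then (yc i) ∘ₗ (xhat j) else 0))
    (h : Module.End ℂ (∀ i, W i))
    (hh : h = 1 + blockMat6 W (fun i j => if i = j then (yc i) ∘ₗ (xhat j) else 0)) :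
    ∃ vm : Module.End ℂ (∀ i, W i),
      (∃ c : ∀ i j : Fin s, W j →ₗ[ℂ] W i,
          (∀ i j, ¬ j < i → c i j = 0) ∧ vm = 1 + blockMat6 W c) ∧
      vm * h = 1 + blockMat6 W (fun i j => if j ≤ i then (yc i) ∘ₗ (xhat j) else 0) ∧
      IsUnit vp ∧ IsUnit h ∧
      (1 : Module.End ℂ (∀ i, W i)) + y ∘ₗ x = vm * h * Ring.inverse vp ∧
      vm * h - vp = blockMat6 W (fun i j => (yc i) ∘ₗ (xhat j)) := by
  classical
  have hφu : ∀ n, φ n * Ring.inverse (φ n) = 1 := fun n => Ring.mul_inverse_cancel _ (hφ n)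
  have huφ : ∀ n, Ring.inverse (φ n) * φ n = 1 := fun n => Ring.inverse_mul_cancel _ (hφ n)
  have hsplit : ∀ j : Fin s, xc j ∘ₗ yc j = φ ((j:ℕ)+1) - φ (j:ℕ) := by
    intro j
    have e : ∀ k : Fin s,
        ((if (k:ℕ) < (j:ℕ)+1 then xc k ∘ₗ yc k else 0) -
          (if (k:ℕ) < (j:ℕ) then xc k ∘ₗ yc k else 0)) =
        (if k = j then xc k ∘ₗ yc k else 0) := by
      intro k
      rcases eq_or_ne k j with rfl | hk
      · simp
      · have hv : (k:ℕ) ≠ (j:ℕ) := fun hvv => hk (Fin.ext hvv)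
        have he : ((k:ℕ) < (j:ℕ)+1) = ((k:ℕ) < (j:ℕ)) := by
          apply propext; constructor <;> intro <;> omega
        simp only [he, sub_self, if_neg hk]
    rw [hφdef ((j:ℕ)+1), hφdef (j:ℕ), add_sub_add_left_eq_sub, ← Finset.sum_sub_distrib,
      Finset.sum_congr rfl (fun k _ => e k)]
    simp
  have key1 : ∀ j : Fin s, Ring.inverse (φ ((j:ℕ)+1)) * ((xc j ∘ₗ yc j) * Ring.inverse (φ (j:ℕ)))
      = Ring.inverse (φ (j:ℕ)) - Ring.inverse (φ ((j:ℕ)+1)) := by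
    intro j
    rw [hsplit j, sub_mul, hφu (j:ℕ), mul_sub, ← mul_assoc, huφ ((j:ℕ)+1), one_mul, mul_one]
  have key2 : ∀ j : Fin s, Ring.inverse (φ (j:ℕ)) * ((xc j ∘ₗ yc j) * Ring.inverse (φ ((j:ℕ)+1)))
      = Ring.inverse (φ (j:ℕ)) - Ring.inverse (φ ((j:ℕ)+1)) := by
    intro j
    rw [hsplit j, sub_mul, hφu ((j:ℕ)+1), mul_sub, mul_one, ← mul_assoc, huφ (j:ℕ), one_mul]
  have formAdd : ∀ (i j : Fin s) (P Q : Module.End ℂ V),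
      yc i ∘ₗ (P ∘ₗ xc j) + yc i ∘ₗ (Q ∘ₗ xc j) = yc i ∘ₗ ((P + Q) ∘ₗ xc j) := by
    intro i j P Q; ext w; simp
  have formSub : ∀ (i j : Fin s) (P Q : Module.End ℂ V),
      yc i ∘ₗ (P ∘ₗ xc j) - yc i ∘ₗ (Q ∘ₗ xc j) = yc i ∘ₗ ((P - Q) ∘ₗ xc j) := by
    intro i j P Q; ext w; simp
  have formNeg : ∀ (i j : Fin s) (P : Module.End ℂ V),
      -(yc i ∘ₗ (P ∘ₗ xc j)) = yc i ∘ₗ ((-P) ∘ₗ xc j) := by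
    intro i j P; ext w; simp
  have form0 : ∀ (i j : Fin s), yc i ∘ₗ (((0 : Module.End ℂ V)) ∘ₗ xc j) = 0 := by
    intro i j; ext w; simp
  have formSum : ∀ (i j : Fin s) (P : Fin s → Module.End ℂ V),
      (∑ k, yc i ∘ₗ (P k ∘ₗ xc j)) = yc i ∘ₗ ((∑ k, P k) ∘ₗ xc j) := by
    intro i j P; ext w; simp
  have colB : ∀ (i k j : Fin s) (P Q : Module.End ℂ V),
      (yc i ∘ₗ (P ∘ₗ xc k)) ∘ₗ (yc k ∘ₗ (Q ∘ₗ xc j))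
        = yc i ∘ₗ ((P * ((xc k ∘ₗ yc k) * Q)) ∘ₗ xc j) := by
    intro i k j P Q; rfl
  have z0 : ∀ i : Fin s, -Ring.inverse (φ ((i:ℕ)+1)) + Ring.inverse (φ (i:ℕ))
      + -(Ring.inverse (φ (i:ℕ)) - Ring.inverse (φ ((i:ℕ)+1))) = (0 : Module.End ℂ V) := by
    intro i; abel
  have z0' : ∀ i : Fin s, Ring.inverse (φ (i:ℕ)) + -Ring.inverse (φ ((i:ℕ)+1))
      + -(Ring.inverse (φ (i:ℕ)) - Ring.inverse (φ ((i:ℕ)+1))) = (0 : Module.End ℂ V) := by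
    intro i; abel
  have zA : ∀ j : Fin s, Ring.inverse (φ ((j:ℕ)+1))
      + (Ring.inverse (φ (j:ℕ)) - Ring.inverse (φ ((j:ℕ)+1))) = Ring.inverse (φ (j:ℕ)) := by
    intro j; abel
  have hhD : h = 1 + blockMat6 W (fun i j => if i = j then yc i ∘ₗ (Ring.inverse (φ (j:ℕ)) ∘ₗ xc j) else 0) := by
    rw [hh]; congr 1
    exact congrArg _ (funext fun i => funext fun j => by rw [hxhat j])
  have hvpU : vp = 1 - blockMat6 W (fun i j => if i < j then yc i ∘ₗ (Ring.inverse (φ (j:ℕ)) ∘ₗ xc j) else 0) := by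
    rw [hvp]; congr 1
    exact congrArg _ (funext fun i => funext fun j => by rw [hxhat j])
  -- (1+G) is a two-sided inverse of h
  have E2 : (1 + blockMat6 W (fun i j => if i = j then -(yc i ∘ₗ (Ring.inverse (φ ((j:ℕ)+1)) ∘ₗ xc j)) else 0)) * h = 1 := by
    rw [hhD]
    have expand : (1 + blockMat6 W (fun i j => if i = j then -(yc i ∘ₗ (Ring.inverse (φ ((j:ℕ)+1)) ∘ₗ xc j)) else 0)) * (1 + blockMat6 W (fun i j => if i = j then yc i ∘ₗ (Ring.inverse (φ (j:ℕ)) ∘ₗ xc j) else 0))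
        = 1 + (blockMat6 W (fun i j => if i = j then -(yc i ∘ₗ (Ring.inverse (φ ((j:ℕ)+1)) ∘ₗ xc j)) else 0) + blockMat6 W (fun i j => if i = j then yc i ∘ₗ (Ring.inverse (φ (j:ℕ)) ∘ₗ xc j) else 0) + blockMat6 W (fun i j => if i = j then -(yc i ∘ₗ (Ring.inverse (φ ((j:ℕ)+1)) ∘ₗ xc j)) else 0) * blockMat6 W (fun i j => if i = j then yc i ∘ₗ (Ring.inverse (φ (j:ℕ)) ∘ₗ xc j) else 0)) := by
      noncomm_ring
    rw [expand]
    have z : blockMat6 W (fun i j => if i = j then -(yc i ∘ₗ (Ring.inverse (φ ((j:ℕ)+1)) ∘ₗ xc j)) else 0) + blockMat6 W (fun i j => if i = j then yc i ∘ₗ (Ring.inverse (φ (j:ℕ)) ∘ₗ xc j) else 0) + blockMat6 W (fun i j => if i = j then -(yc i ∘ₗ (Ring.inverse (φ ((j:ℕ)+1)) ∘ₗ xc j)) else 0) * blockMat6 W (fun i j => if i = j then yc i ∘ₗ (Ring.inverse (φ (j:ℕ)) ∘ₗ xc j) else 0) = 0 := by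
      rw [blockMat6_mul, blockMat6_add, blockMat6_add, ← blockMat6_zero]
      have e : ∀ i j : Fin s,
          ((if i = j then -(yc i ∘ₗ (Ring.inverse (φ ((j:ℕ)+1)) ∘ₗ xc j)) else 0)
            + (if i = j then yc i ∘ₗ (Ring.inverse (φ (j:ℕ)) ∘ₗ xc j) else 0))
          + (∑ k, (if i = k then -(yc i ∘ₗ (Ring.inverse (φ ((k:ℕ)+1)) ∘ₗ xc k)) else 0)
              ∘ₗ (if k = j then yc k ∘ₗ (Ring.inverse (φ (j:ℕ)) ∘ₗ xc j) else 0))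
          = (0 : W j →ₗ[ℂ] W i) := by
        intro i j
        rcases eq_or_ne i j with rfl | hij
        · rw [Finset.sum_eq_single i]
          · rw [if_pos (rfl : i = i), if_pos (rfl : i = i), neg_comp, colB, key1 i,
              formNeg, formNeg, formAdd, formAdd, z0 i, form0]
          · intro k _ hk
            rw [if_neg (fun e' => hk (Eq.symm e')), zero_comp]
          · simp
        · rw [Finset.sum_eq_single j]
          · simp [hij]
          · intro k _ hk
            rw [if_neg hk, comp_zero]
          · simp
      exact congrArg _ (funext fun i => funext fun j => e i j)
    rw [z, add_zero]
  have E3 : h * (1 + blockMat6 W (fun i j => if i = j then -(yc i ∘ₗ (Ring.inverse (φ ((j:ℕ)+1)) ∘ₗ xc j)) else 0)) = 1 := by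
    rw [hhD]
    have expand : (1 + blockMat6 W (fun i j => if i = j then yc i ∘ₗ (Ring.inverse (φ (j:ℕ)) ∘ₗ xc j) else 0)) * (1 + blockMat6 W (fun i j => if i = j then -(yc i ∘ₗ (Ring.inverse (φ ((j:ℕ)+1)) ∘ₗ xc j)) else 0))
        = 1 + (blockMat6 W (fun i j => if i = j then yc i ∘ₗ (Ring.inverse (φ (j:ℕ)) ∘ₗ xc j) else 0) + blockMat6 W (fun i j => if i = j then -(yc i ∘ₗ (Ring.inverse (φ ((j:ℕ)+1)) ∘ₗ xc j)) else 0) + blockMat6 W (fun i j => if i = j then yc i ∘ₗ (Ring.inverse (φ (j:ℕ)) ∘ₗ xc j) else 0) * blockMat6 W (fun i j => if i = j then -(yc i ∘ₗ (Ring.inverse (φ ((j:ℕ)+1)) ∘ₗ xc j)) else 0)) := by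
      noncomm_ring
    rw [expand]
    have z : blockMat6 W (fun i j => if i = j then yc i ∘ₗ (Ring.inverse (φ (j:ℕ)) ∘ₗ xc j) else 0) + blockMat6 W (fun i j => if i = j then -(yc i ∘ₗ (Ring.inverse (φ ((j:ℕ)+1)) ∘ₗ xc j)) else 0) + blockMat6 W (fun i j => if i = j then yc i ∘ₗ (Ring.inverse (φ (j:ℕ)) ∘ₗ xc j) else 0) * blockMat6 W (fun i j => if i = j then -(yc i ∘ₗ (Ring.inverse (φ ((j:ℕ)+1)) ∘ₗ xc j)) else 0) = 0 := by
      rw [blockMat6_mul, blockMat6_add, blockMat6_add, ← blockMat6_zero]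
      have e : ∀ i j : Fin s,
          ((if i = j then yc i ∘ₗ (Ring.inverse (φ (j:ℕ)) ∘ₗ xc j) else 0)
            + (if i = j then -(yc i ∘ₗ (Ring.inverse (φ ((j:ℕ)+1)) ∘ₗ xc j)) else 0))
          + (∑ k, (if i = k then yc i ∘ₗ (Ring.inverse (φ (k:ℕ)) ∘ₗ xc k) else 0)
              ∘ₗ (if k = j then -(yc k ∘ₗ (Ring.inverse (φ ((j:ℕ)+1)) ∘ₗ xc j)) else 0))
          = (0 : W j →ₗ[ℂ] W i) := by
        intro i j
        rcases eq_or_ne i j with rfl | hij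
        · rw [Finset.sum_eq_single i]
          · rw [if_pos (rfl : i = i), if_pos (rfl : i = i), comp_neg, colB, key2 i,
              formNeg, formNeg, formAdd, formAdd, z0' i, form0]
          · intro k _ hk
            rw [if_neg (fun e' => hk (Eq.symm e')), zero_comp]
          · simp
        · rw [Finset.sum_eq_single j]
          · simp [hij]
          · intro k _ hk
            rw [if_neg hk, comp_zero]
          · simp
      exact congrArg _ (funext fun i => funext fun j => e i j)
    rw [z, add_zero]
  have hUnit : IsUnit h := ⟨⟨h, 1 + blockMat6 W (fun i j => if i = j then -(yc i ∘ₗ (Ring.inverse (φ ((j:ℕ)+1)) ∘ₗ xc j)) else 0), E3, E2⟩, rfl⟩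
  have hvpUnit : IsUnit vp := by
    rw [hvpU]
    exact (nilp_upper _ (fun i j hij => if_neg hij)).isUnit_one_sub
  -- vm * h = 1 + lower-with-diagonal
  have hE1 : (1 + blockMat6 W (fun i j => if j < i then yc i ∘ₗ (Ring.inverse (φ ((j:ℕ)+1)) ∘ₗ xc j) else 0)) * h = 1 + blockMat6 W (fun i j => if j ≤ i then yc i ∘ₗ (Ring.inverse (φ (j:ℕ)) ∘ₗ xc j) else 0) := by
    rw [hhD]
    have expand : (1 + blockMat6 W (fun i j => if j < i then yc i ∘ₗ (Ring.inverse (φ ((j:ℕ)+1)) ∘ₗ xc j) else 0)) * (1 + blockMat6 W (fun i j => if i = j then yc i ∘ₗ (Ring.inverse (φ (j:ℕ)) ∘ₗ xc j) else 0))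
        = 1 + (blockMat6 W (fun i j => if j < i then yc i ∘ₗ (Ring.inverse (φ ((j:ℕ)+1)) ∘ₗ xc j) else 0) + blockMat6 W (fun i j => if i = j then yc i ∘ₗ (Ring.inverse (φ (j:ℕ)) ∘ₗ xc j) else 0) + blockMat6 W (fun i j => if j < i then yc i ∘ₗ (Ring.inverse (φ ((j:ℕ)+1)) ∘ₗ xc j) else 0) * blockMat6 W (fun i j => if i = j then yc i ∘ₗ (Ring.inverse (φ (j:ℕ)) ∘ₗ xc j) else 0)) := by
      noncomm_ring
    rw [expand]
    have z : blockMat6 W (fun i j => if j < i then yc i ∘ₗ (Ring.inverse (φ ((j:ℕ)+1)) ∘ₗ xc j) else 0) + blockMat6 W (fun i j => if i = j then yc i ∘ₗ (Ring.inverse (φ (j:ℕ)) ∘ₗ xc j) else 0) + blockMat6 W (fun i j => if j < i then yc i ∘ₗ (Ring.inverse (φ ((j:ℕ)+1)) ∘ₗ xc j) else 0) * blockMat6 W (fun i j => if i = j then yc i ∘ₗ (Ring.inverse (φ (j:ℕ)) ∘ₗ xc j) else 0)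
        = blockMat6 W (fun i j => if j ≤ i then yc i ∘ₗ (Ring.inverse (φ (j:ℕ)) ∘ₗ xc j) else 0) := by
      rw [blockMat6_mul, blockMat6_add, blockMat6_add]
      have e : ∀ i j : Fin s,
          ((if j < i then yc i ∘ₗ (Ring.inverse (φ ((j:ℕ)+1)) ∘ₗ xc j) else 0)
            + (if i = j then yc i ∘ₗ (Ring.inverse (φ (j:ℕ)) ∘ₗ xc j) else 0))
          + (∑ k, (if k < i then yc i ∘ₗ (Ring.inverse (φ ((k:ℕ)+1)) ∘ₗ xc k) else 0)
              ∘ₗ (if k = j then yc k ∘ₗ (Ring.inverse (φ (j:ℕ)) ∘ₗ xc j) else 0))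
          = (if j ≤ i then yc i ∘ₗ (Ring.inverse (φ (j:ℕ)) ∘ₗ xc j) else 0) := by
        intro i j
        rw [Finset.sum_eq_single j]
        · rcases lt_trichotomy j i with hlt | rfl | hgt
          · rw [if_neg (ne_of_gt hlt), if_pos (le_of_lt hlt), if_pos (rfl : j = j),
              add_zero, if_pos hlt, colB, key1 j, formAdd, zA j]
          · simp
          · simp [ne_of_lt hgt, not_le.mpr hgt, asymm hgt]
        · intro k _ hk
          rw [if_neg hk, comp_zero]
        · simp
      exact congrArg _ (funext fun i => funext fun j => e i j)
    rw [z]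
  -- y ∘ x as a block matrix
  have hyx : (y ∘ₗ x : Module.End ℂ (∀ i, W i)) = blockMat6 W (fun i j => yc i ∘ₗ ((1 : Module.End ℂ V) ∘ₗ xc j)) := by
    apply ent_ext
    intro i j
    rw [ent_blockMat6]
    ext w
    simp [ent, hyc, hxc]
  -- (1 + yx)(1 - U) = 1 + T
  have hE4 : blockMat6 W (fun i j => yc i ∘ₗ ((1 : Module.End ℂ V) ∘ₗ xc j)) - blockMat6 W (fun i j => if i < j then yc i ∘ₗ (Ring.inverse (φ (j:ℕ)) ∘ₗ xc j) else 0) - blockMat6 W (fun i j => yc i ∘ₗ ((1 : Module.End ℂ V) ∘ₗ xc j)) * blockMat6 W (fun i j => if i < j then yc i ∘ₗ (Ring.inverse (φ (j:ℕ)) ∘ₗ xc j) else 0)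
      = blockMat6 W (fun i j => if j ≤ i then yc i ∘ₗ (Ring.inverse (φ (j:ℕ)) ∘ₗ xc j) else 0) := by
    rw [blockMat6_mul, blockMat6_sub, blockMat6_sub]
    have sum4 : ∀ i j : Fin s,
        (∑ k, (yc i ∘ₗ ((1 : Module.End ℂ V) ∘ₗ xc k))
            ∘ₗ (if k < j then yc k ∘ₗ (Ring.inverse (φ (j:ℕ)) ∘ₗ xc j) else 0))
        = yc i ∘ₗ (((1 : Module.End ℂ V) - Ring.inverse (φ (j:ℕ))) ∘ₗ xc j) := by
      intro i j
      have step : ∀ k : Fin s, (yc i ∘ₗ ((1 : Module.End ℂ V) ∘ₗ xc k))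
          ∘ₗ (if k < j then yc k ∘ₗ (Ring.inverse (φ (j:ℕ)) ∘ₗ xc j) else 0)
          = yc i ∘ₗ ((if (k:ℕ) < (j:ℕ) then (xc k ∘ₗ yc k) * Ring.inverse (φ (j:ℕ)) else 0)
              ∘ₗ xc j) := by
        intro k
        by_cases hk : k < j
        · rw [if_pos hk, if_pos (show (k:ℕ) < (j:ℕ) from hk), colB, one_mul]
        · rw [if_neg hk, comp_zero, if_neg (show ¬ (k:ℕ) < (j:ℕ) from hk), form0]
      rw [Finset.sum_congr rfl (fun k _ => step k), formSum]
      have inner : (∑ k : Fin s, if (k:ℕ) < (j:ℕ)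
            then (xc k ∘ₗ yc k) * Ring.inverse (φ (j:ℕ)) else 0)
          = (1 : Module.End ℂ V) - Ring.inverse (φ (j:ℕ)) := by
        have e0 : ∀ k : Fin s, (if (k:ℕ) < (j:ℕ)
              then (xc k ∘ₗ yc k) * Ring.inverse (φ (j:ℕ)) else 0)
            = (if (k:ℕ) < (j:ℕ) then xc k ∘ₗ yc k else 0) * Ring.inverse (φ (j:ℕ)) := by
          intro k; split_ifs <;> simp
        rw [Finset.sum_congr rfl (fun k _ => e0 k), ← Finset.sum_mul]
        have hS : (∑ k : Fin s, if (k:ℕ) < (j:ℕ) then xc k ∘ₗ yc k else 0)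
            = φ (j:ℕ) - 1 := by
          rw [hφdef (j:ℕ)]; abel
        rw [hS, sub_mul, hφu (j:ℕ), one_mul]
      rw [inner]
    have e : ∀ i j : Fin s,
        ((yc i ∘ₗ ((1 : Module.End ℂ V) ∘ₗ xc j))
          - (if i < j then yc i ∘ₗ (Ring.inverse (φ (j:ℕ)) ∘ₗ xc j) else 0))
        - (∑ k, (yc i ∘ₗ ((1 : Module.End ℂ V) ∘ₗ xc k))
            ∘ₗ (if k < j then yc k ∘ₗ (Ring.inverse (φ (j:ℕ)) ∘ₗ xc j) else 0))
        = (if j ≤ i then yc i ∘ₗ (Ring.inverse (φ (j:ℕ)) ∘ₗ xc j) else 0) := by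
      intro i j
      rw [sum4 i j]
      by_cases hij : i < j
      · rw [if_pos hij, if_neg (not_le.mpr hij), formSub, formSub]
        have zz : (1 : Module.End ℂ V) - Ring.inverse (φ (j:ℕ))
            - (1 - Ring.inverse (φ (j:ℕ))) = 0 := by abel
        rw [zz, form0]
      · rw [if_neg hij, sub_zero, if_pos (le_of_not_gt hij), formSub]
        have zz : (1 : Module.End ℂ V) - ((1 : Module.End ℂ V) - Ring.inverse (φ (j:ℕ)))
            = Ring.inverse (φ (j:ℕ)) := by abel
        rw [zz]
    exact congrArg _ (funext fun i => funext fun j => e i j)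
  have main1 : ((1 : Module.End ℂ (∀ i, W i)) + y ∘ₗ x) * vp = (1 + blockMat6 W (fun i j => if j < i then yc i ∘ₗ (Ring.inverse (φ ((j:ℕ)+1)) ∘ₗ xc j) else 0)) * h := by
    rw [hvpU, hyx, hE1]
    have expand : ((1 : Module.End ℂ (∀ i, W i)) + blockMat6 W (fun i j => yc i ∘ₗ ((1 : Module.End ℂ V) ∘ₗ xc j))) * (1 - blockMat6 W (fun i j => if i < j then yc i ∘ₗ (Ring.inverse (φ (j:ℕ)) ∘ₗ xc j) else 0))
        = 1 + (blockMat6 W (fun i j => yc i ∘ₗ ((1 : Module.End ℂ V) ∘ₗ xc j)) - blockMat6 W (fun i j => if i < j then yc i ∘ₗ (Ring.inverse (φ (j:ℕ)) ∘ₗ xc j) else 0) - blockMat6 W (fun i j => yc i ∘ₗ ((1 : Module.End ℂ V) ∘ₗ xc j)) * blockMat6 W (fun i j => if i < j then yc i ∘ₗ (Ring.inverse (φ (j:ℕ)) ∘ₗ xc j) else 0)) := by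
      rw [add_mul, one_mul, mul_sub, mul_one]; abel
    rw [expand, hE4]
  refine ⟨1 + blockMat6 W (fun i j => if j < i then yc i ∘ₗ (Ring.inverse (φ ((j:ℕ)+1)) ∘ₗ xc j) else 0), ⟨(fun i j => if j < i then yc i ∘ₗ (Ring.inverse (φ ((j:ℕ)+1)) ∘ₗ xc j) else 0), fun i j hji => if_neg hji, rfl⟩, ?_, hvpUnit, hUnit, ?_, ?_⟩
  · rw [hE1]
    congr 1
    exact congrArg _ (funext fun i => funext fun j => by rw [hxhat j])
  · rw [← main1, mul_assoc, Ring.mul_inverse_cancel vp hvpUnit, mul_one]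
  · rw [hE1, hvpU]
    have step : (1 + blockMat6 W (fun i j => if j ≤ i then yc i ∘ₗ (Ring.inverse (φ (j:ℕ)) ∘ₗ xc j) else 0)) - (1 - blockMat6 W (fun i j => if i < j then yc i ∘ₗ (Ring.inverse (φ (j:ℕ)) ∘ₗ xc j) else 0))
        = blockMat6 W (fun i j => if j ≤ i then yc i ∘ₗ (Ring.inverse (φ (j:ℕ)) ∘ₗ xc j) else 0) + blockMat6 W (fun i j => if i < j then yc i ∘ₗ (Ring.inverse (φ (j:ℕ)) ∘ₗ xc j) else 0) := by abel
    rw [step, blockMat6_add]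
    have e : ∀ i j : Fin s,
        ((if j ≤ i then yc i ∘ₗ (Ring.inverse (φ (j:ℕ)) ∘ₗ xc j) else 0)
          + (if i < j then yc i ∘ₗ (Ring.inverse (φ (j:ℕ)) ∘ₗ xc j) else 0))
        = (yc i) ∘ₗ (xhat j) := by
      intro i j
      rw [hxhat j]
      by_cases hij : j ≤ i
      · rw [if_pos hij, if_neg (not_lt.mpr hij), add_zero]
      · rw [if_neg hij, if_pos (not_le.mp hij), zero_add]
    exact congrArg _ (funext fun i => funext fun j => e i j)
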